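/- Let G be a nontrivial additive subgroup of ℂ. The space of 1/2-derivations of the deformed generalized Heisenberg–Virasoro algebra g(G,−1) is two-dimensional, spanned by the identity map and the linear map φ determined on the basis by φ(I_0) = C_L and φ(L_a) = 0 for all a ∈ G, φ(I_a) = 0 for all a ∈ G with a ≠ 0, φ(C_L) = 0. That is, a linear map ψ : g(G,−1) → g(G,−1) is a 1/2-derivation if and only if there exist α, α' ∈ ℂ with ψ = α·Id + α'·φ. -/

import Mathlib

open scoped Classical

/-- Index set for the basis of the deformed generalized Heisenberg–Virasoro
algebra `g(G, -1)`: vectors `L a`, `I a` for `a ∈ G` together with the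
central element `C_L`. -/
inductive DGHVIdx (G : AddSubgroup ℂ) : Type
  | L : G → DGHVIdx G
  | I : G → DGHVIdx G
  | CL : DGHVIdx G

/-!
Bracketing with `L_0` is diagonal in the basis `e_i`, with eigenvalue `wt i` equal to `a` on `L_a`
and `I_a` and to `0` on `C_L`. So the `1/2`-derivation identity for `(L_0, e_i)` reads
`(2 wt i - wt k) ψ(e_i)_k = ⁅ψ L_0, e_i⁆_k` coordinatewise. The centre is `ℂ C_L` and `ψ` maps
it into itself; together with the identity for `(L_g, L_{-g})`, the weight identity then gives
`ψ L_0 ≡ α L_0` modulo the centre. After that it kills every coordinate of `ψ(e_i)` except the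
diagonal one, which is `α` when `wt i ≠ 0`, and those of weight `2 wt i`. These are killed by the
identity for the pairs `(L_b, I_0)`, `(L_b, I_{-b})` and `(L_c, L_{b-c})`, and the Virasoro cocycle
at `a = g, 2g` gives `ψ C_L = α C_L`. Only `ψ(I_0)_{C_L}` stays free: no bracket has an
`I_0`-component, and `C_L` is central.
-/

section HalfDerivation

variable {K L : Type*} [Field K] [LieRing L] [LieAlgebra K L]

def IsHalfDerivation (ψ : L →ₗ[K] L) : Prop :=
  ∀ x y : L, ψ ⁅x, y⁆ = (1 / 2 : K) • (⁅ψ x, y⁆ + ⁅x, ψ y⁆)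

theorem Module.Basis.repr_lie_eq_mul_repr {ι : Type*} (bas : Module.Basis ι K L) {u : L}
    {k k' : ι} {c : K} (h : ∀ i, bas.repr ⁅u, bas i⁆ k = c * bas.repr (bas i) k') (x : L) :
    bas.repr ⁅u, x⁆ k = c * bas.repr x k' := by
  have := bas.ext (f₁ := bas.coord k ∘ₗ LieAlgebra.ad K L u) (f₂ := c • bas.coord k')
    (by simpa using h)
  simpa using LinearMap.congr_fun this x

theorem Module.Basis.repr_lie_of_eigen {ι : Type*} (bas : Module.Basis ι K L) {h : L}
    {wt : ι → K} (hh : ∀ i, ⁅h, bas i⁆ = wt i • bas i) (x : L) (k : ι) :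
    bas.repr ⁅h, x⁆ k = wt k * bas.repr x k :=
  bas.repr_lie_eq_mul_repr (fun i => by
    rw [hh, map_smul, Finsupp.smul_apply, bas.repr_self, smul_eq_mul]
    by_cases hik : i = k <;> simp [hik]) x

theorem Module.Basis.constr_eq_smulRight_coord {ι R M : Type*} [CommSemiring R] [AddCommMonoid M]
    [Module R M] (b : Module.Basis ι R M) {f : ι → M} {i₀ : ι} {v : M}
    (hf : ∀ i, f i = if i = i₀ then v else 0) : b.constr R f = (b.coord i₀).smulRight v :=
  b.ext fun i => by by_cases h : i = i₀ <;> simp [hf, h, Ne.symm]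

namespace IsHalfDerivation

variable {ψ φ : L →ₗ[K] L}

theorem add (hψ : IsHalfDerivation ψ) (hφ : IsHalfDerivation φ) :
    IsHalfDerivation (ψ + φ) := by
  intro x y
  simp only [LinearMap.add_apply, hψ x y, hφ x y, add_lie, lie_add, smul_add]
  abel

theorem smul (hψ : IsHalfDerivation ψ) (c : K) : IsHalfDerivation (c • ψ) := by
  intro x y
  simp only [LinearMap.smul_apply, hψ x y, smul_lie, lie_smul, ← smul_add, smul_comm c]

theorem of_lie_eq_zero (hbr : ∀ x y : L, φ ⁅x, y⁆ = 0)
    (hc : ∀ x y : L, ⁅φ x, y⁆ = 0) :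
    IsHalfDerivation φ := by
  intro x y
  rw [hbr, hc, ← lie_skew, hc, neg_zero, add_zero, smul_zero]

variable [NeZero (2 : K)]

theorem _root_.isHalfDerivation_id : IsHalfDerivation (LinearMap.id : L →ₗ[K] L) := by
  intro x y
  simp only [LinearMap.id_apply]
  rw [← two_smul K ⁅x, y⁆, smul_smul, one_div_mul_cancel two_ne_zero, one_smul]

theorem two_mul_repr {ι : Type*} (hψ : IsHalfDerivation ψ) (bas : Module.Basis ι K L)
    (x y : L) (k : ι) :
    2 * bas.repr (ψ ⁅x, y⁆) k = bas.repr ⁅ψ x, y⁆ k + bas.repr ⁅x, ψ y⁆ k := by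
  rw [hψ x y, map_smul, Finsupp.smul_apply, smul_eq_mul, ← mul_assoc,
    mul_one_div_cancel two_ne_zero, one_mul, map_add, Finsupp.add_apply]

theorem lie_apply_eq_zero_of_forall_lie_eq_zero (hψ : IsHalfDerivation ψ) {z : L}
    (hz : ∀ y : L, ⁅z, y⁆ = 0) (y : L) :
    ⁅ψ z, y⁆ = 0 := by
  have h := hψ z y
  rw [hz, hz, map_zero, add_zero, eq_comm, smul_eq_zero] at h
  exact h.resolve_left (one_div_ne_zero two_ne_zero)

variable {ι : Type*} (bas : Module.Basis ι K L) {h : L} {wt : ι → K}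
  (hh : ∀ i, ⁅h, bas i⁆ = wt i • bas i)
include hh

theorem sub_mul_repr_apply (hψ : IsHalfDerivation ψ) (i k : ι) :
    (2 * wt i - wt k) * bas.repr (ψ (bas i)) k = bas.repr ⁅ψ h, bas i⁆ k := by
  have e := hψ.two_mul_repr bas h (bas i) k
  rw [hh, map_smul, map_smul, Finsupp.smul_apply, smul_eq_mul, bas.repr_lie_of_eigen hh] at e
  linear_combination e

variable {α : K} (hψh : ∀ y : L, ⁅ψ h, y⁆ = α • ⁅h, y⁆)
include hψh

theorem repr_apply_basis_eq_zero (hψ : IsHalfDerivation ψ) {i k : ι} (hki : k ≠ i)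
    (hk : wt k ≠ 2 * wt i) : bas.repr (ψ (bas i)) k = 0 := by
  have e := hψ.sub_mul_repr_apply bas hh i k
  rw [hψh, hh, smul_smul, map_smul, bas.repr_self, Finsupp.smul_apply,
    Finsupp.single_eq_of_ne hki, smul_zero] at e
  exact (mul_eq_zero.mp e).resolve_left (sub_ne_zero.mpr hk.symm)

theorem repr_apply_basis_self (hψ : IsHalfDerivation ψ) {i : ι} (hi : wt i ≠ 0) :
    bas.repr (ψ (bas i)) i = α := by
  have e := hψ.sub_mul_repr_apply bas hh i i
  rw [hψh, hh, smul_smul, map_smul, bas.repr_self, Finsupp.smul_apply,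
    Finsupp.single_eq_same, smul_eq_mul, mul_one] at e
  exact mul_left_cancel₀ hi (by linear_combination e)

end IsHalfDerivation

end HalfDerivation

theorem AddSubgroup.exists_coe_notMem {M : Type*} [AddCommGroup M] [IsAddTorsionFree M]
    (G : AddSubgroup M) [Nontrivial G] (s : Finset M) : ∃ c : G, (c : M) ∉ s := by
  obtain ⟨g, hg⟩ := exists_ne (0 : G)
  have : Infinite G := Infinite.of_injective (fun n : ℤ => n • g) (smul_left_injective ℤ hg)
  obtain ⟨c, hc⟩ := Infinite.exists_notMem_finset
    (s.preimage ((↑) : G → M) Subtype.val_injective.injOn)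
  exact ⟨c, by simpa using hc⟩

theorem AddSubgroup.coe_eq_two_mul_coe_iff {R : Type*} [Ring R] {G : AddSubgroup R} {b c : G} :
    (c : R) = 2 * b ↔ c = b + b := by
  rw [two_mul, ← AddSubgroup.coe_add, Subtype.coe_inj]

def DGHVIdx.weight {G : AddSubgroup ℂ} : DGHVIdx G → ℂ
  | .CL => 0
  | .L a => a
  | .I a => a

structure IsDGHVBasis {G : AddSubgroup ℂ} {Lg : Type*} [LieRing Lg] [LieAlgebra ℂ Lg]
    (bas : Module.Basis (DGHVIdx G) ℂ Lg) : Prop where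
  lie_L_L : ∀ a b : G, ⁅bas (DGHVIdx.L a), bas (DGHVIdx.L b)⁆ =
      ((b : ℂ) - (a : ℂ)) • bas (DGHVIdx.L (a + b)) +
        (if a + b = 0 then ((a : ℂ) ^ 3 - (a : ℂ)) / 12 else 0) • bas DGHVIdx.CL
  lie_L_I : ∀ a b : G, ⁅bas (DGHVIdx.L a), bas (DGHVIdx.I b)⁆ =
      ((a : ℂ) + (b : ℂ)) • bas (DGHVIdx.I (a + b))
  lie_I_I : ∀ a b : G, ⁅bas (DGHVIdx.I a), bas (DGHVIdx.I b)⁆ = 0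
  CL_lie : ∀ x : Lg, ⁅bas DGHVIdx.CL, x⁆ = 0

namespace IsDGHVBasis

variable {G : AddSubgroup ℂ} {Lg : Type*} [LieRing Lg] [LieAlgebra ℂ Lg]
  {bas : Module.Basis (DGHVIdx G) ℂ Lg} (hB : IsDGHVBasis bas)
include hB

theorem lie_CL (x : Lg) : ⁅x, bas .CL⁆ = 0 := by
  rw [← lie_skew, hB.CL_lie, neg_zero]

theorem L_zero_lie (i : DGHVIdx G) : ⁅bas (.L 0), bas i⁆ = i.weight • bas i := by
  cases i with
  | L a => simp [hB.lie_L_L, DGHVIdx.weight]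
  | I a => simp [hB.lie_L_I, DGHVIdx.weight]
  | CL => simp [hB.lie_CL, DGHVIdx.weight]

theorem repr_L_lie_L (a j : G) (x : Lg) :
    bas.repr ⁅bas (.L a), x⁆ (.L j) = ((j : ℂ) - 2 * a) * bas.repr x (.L (j - a)) := by
  refine bas.repr_lie_eq_mul_repr (fun i => ?_) x
  cases i with
  | L c =>
    by_cases hc : c = j - a
    · subst hc; simp [hB.lie_L_L, apply_ite bas.repr, DFunLike.ite_apply]; ring
    · have : a + c ≠ j := fun h => hc (by rw [← h]; abel)
      simp [hB.lie_L_L, apply_ite bas.repr, DFunLike.ite_apply, this, hc]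
  | I c => simp [hB.lie_L_I]
  | CL => simp [hB.lie_CL]

theorem repr_L_lie_I (a j : G) (x : Lg) :
    bas.repr ⁅bas (.L a), x⁆ (.I j) = (j : ℂ) * bas.repr x (.I (j - a)) := by
  refine bas.repr_lie_eq_mul_repr (fun i => ?_) x
  cases i with
  | L c => simp [hB.lie_L_L, apply_ite bas.repr, DFunLike.ite_apply]
  | I c =>
    by_cases hc : c = j - a
    · subst hc; simp [hB.lie_L_I]
    · have : a + c ≠ j := fun h => hc (by rw [← h]; abel)
      simp [hB.lie_L_I, this, hc]
  | CL => simp [hB.lie_CL]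

theorem repr_L_lie_CL (a : G) (x : Lg) :
    bas.repr ⁅bas (.L a), x⁆ .CL = ((a : ℂ) ^ 3 - a) / 12 * bas.repr x (.L (-a)) := by
  refine bas.repr_lie_eq_mul_repr (fun i => ?_) x
  cases i with
  | L c =>
    by_cases hc : c = -a
    · subst hc; simp [hB.lie_L_L]
    · have : a + c ≠ 0 := fun h => hc (eq_neg_of_add_eq_zero_right h)
      simp [hB.lie_L_L, this, hc]
  | I c => simp [hB.lie_L_I]
  | CL => simp [hB.lie_CL]

theorem repr_I_lie_L (a j : G) (x : Lg) : bas.repr ⁅bas (.I a), x⁆ (.L j) = 0 := by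
  simpa using bas.repr_lie_eq_mul_repr (c := 0) (k' := .CL) (fun i => by
    cases i with
    | L c => rw [← lie_skew]; simp [hB.lie_L_I]
    | I c => simp [hB.lie_I_I]
    | CL => simp [hB.lie_CL]) x

theorem repr_I_lie_I (a j : G) (x : Lg) :
    bas.repr ⁅bas (.I a), x⁆ (.I j) = -(j : ℂ) * bas.repr x (.L (j - a)) := by
  refine bas.repr_lie_eq_mul_repr (fun i => ?_) x
  cases i with
  | L c =>
    rw [← lie_skew]
    by_cases hc : c = j - a
    · subst hc; simp [hB.lie_L_I]
    · have : c + a ≠ j := fun h => hc (by rw [← h]; abel)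
      simp [hB.lie_L_I, this, hc]
  | I c => simp [hB.lie_I_I]
  | CL => simp [hB.lie_CL]

theorem repr_lie_I_zero (x y : Lg) : bas.repr ⁅x, y⁆ (.I 0) = 0 := by
  simpa using bas.repr_lie_eq_mul_repr (c := 0) (k' := .CL) (fun i => by
    rw [← lie_skew, map_neg, Finsupp.neg_apply, zero_mul, neg_eq_zero]
    cases i with
    | L a => simp [hB.repr_L_lie_I]
    | I a => simp [hB.repr_I_lie_I]
    | CL => simp [hB.CL_lie]) y

theorem isHalfDerivation_smulRight_coord_I_zero :
    IsHalfDerivation ((bas.coord (.I 0)).smulRight (bas .CL)) :=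
  .of_lie_eq_zero (fun x y => by simp [hB.repr_lie_I_zero])
    (fun x y => by simp [hB.CL_lie])

theorem repr_eq_zero_of_forall_L_lie_eq_zero [Nontrivial G] {x : Lg}
    (hx : ∀ a, ⁅bas (.L a), x⁆ = 0) {k : DGHVIdx G} (hk : k ≠ .CL) : bas.repr x k = 0 := by
  cases k with
  | L b =>
    obtain ⟨a, ha⟩ := exists_ne b
    have e := hB.repr_L_lie_L a (a + b) x
    rw [hx, map_zero, Finsupp.zero_apply, add_sub_cancel_left, eq_comm] at e
    refine (mul_eq_zero.mp e).resolve_left fun h => ha (Subtype.ext ?_)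
    push_cast at h
    linear_combination -h
  | I b =>
    obtain ⟨a, ha⟩ := exists_ne (-b)
    have e := hB.repr_L_lie_I a (a + b) x
    rw [hx, map_zero, Finsupp.zero_apply, add_sub_cancel_left, eq_comm] at e
    refine (mul_eq_zero.mp e).resolve_left fun h => ha (Subtype.ext ?_)
    push_cast at h ⊢
    linear_combination h
  | CL => exact absurd rfl hk

theorem repr_L_zero_eq_of_lie_eq [Nontrivial G] {x : Lg} {α : ℂ}
    (hx : ∀ y : Lg, ⁅x, y⁆ = α • ⁅bas (.L 0), y⁆) : bas.repr x (.L 0) = α := by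
  have h := hB.repr_eq_zero_of_forall_L_lie_eq_zero (x := x - α • bas (.L 0))
    (fun a => by
      rw [lie_sub, lie_smul, ← lie_skew, hx, ← lie_skew (bas (.L a)) (bas (.L 0)), smul_neg,
        sub_neg_eq_add, neg_add_cancel])
    (k := .L 0) (by simp)
  simpa [sub_eq_zero] using h

variable {ψ : Lg →ₗ[ℂ] Lg} (hψ : IsHalfDerivation ψ)
include hψ

theorem repr_apply_CL_of_ne [Nontrivial G] {k : DGHVIdx G} (hk : k ≠ .CL) :
    bas.repr (ψ (bas .CL)) k = 0 :=
  hB.repr_eq_zero_of_forall_L_lie_eq_zero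
    (fun a => by
      rw [← lie_skew, hψ.lie_apply_eq_zero_of_forall_lie_eq_zero hB.CL_lie, neg_zero]) hk

theorem repr_apply_L_zero_L {b : G} (hb : b ≠ 0) : bas.repr (ψ (bas (.L 0))) (.L b) = 0 := by
  have e := hψ.sub_mul_repr_apply bas hB.L_zero_lie (.I b) (.I (b + b))
  rw [← lie_skew, map_neg, Finsupp.neg_apply, hB.repr_I_lie_I, add_sub_cancel_right] at e
  simp only [DGHVIdx.weight] at e
  push_cast at e
  have hbC : (b : ℂ) ≠ 0 := fun h => hb (Subtype.ext h)
  refine (mul_eq_zero.mp ?_).resolve_left hbC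
  linear_combination -e / 2

theorem repr_apply_L_zero_I [Nontrivial G] (j : G) : bas.repr (ψ (bas (.L 0))) (.I j) = 0 := by
  obtain ⟨g, hg⟩ := exists_ne (0 : G)
  have e₁ := hψ.sub_mul_repr_apply bas hB.L_zero_lie (.L g) (.I (j + g))
  rw [← lie_skew, map_neg, Finsupp.neg_apply, hB.repr_L_lie_I, add_sub_cancel_right] at e₁
  have e₂ := hψ.sub_mul_repr_apply bas hB.L_zero_lie (.L (-g)) (.I (j - g))
  rw [← lie_skew, map_neg, Finsupp.neg_apply, hB.repr_L_lie_I, sub_neg_eq_add,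
    sub_add_cancel] at e₂
  have e₃ := hψ.two_mul_repr bas (bas (.L g)) (bas (.L (-g))) (.I j)
  rw [hB.lie_L_L, add_neg_cancel, if_pos rfl, map_add, map_smul, map_smul, map_add, map_smul,
    map_smul, Finsupp.add_apply, Finsupp.smul_apply, Finsupp.smul_apply,
    hB.repr_apply_CL_of_ne hψ (by simp), ← lie_skew (ψ _), map_neg, Finsupp.neg_apply,
    hB.repr_L_lie_I, hB.repr_L_lie_I, sub_neg_eq_add] at e₃
  simp only [DGHVIdx.weight, smul_eq_mul] at e₁ e₂ e₃
  push_cast at e₁ e₂ e₃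
  have hgC : (g : ℂ) ≠ 0 := fun h => hg (Subtype.ext h)
  refine (mul_eq_zero.mp ?_).resolve_left (pow_ne_zero 3 hgC)
  linear_combination ((g + j) * j * e₁ + (g - j) * j * e₂ - (g - j) * (g + j) * e₃) / 4

theorem lie_apply_L_zero [Nontrivial G] (y : Lg) :
    ⁅ψ (bas (.L 0)), y⁆ = bas.repr (ψ (bas (.L 0))) (.L 0) • ⁅bas (.L 0), y⁆ := by
  have h : ψ (bas (.L 0)) = bas.repr (ψ (bas (.L 0))) (.L 0) • bas (.L 0) +
      bas.repr (ψ (bas (.L 0))) .CL • bas .CL := by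
    refine bas.ext_elem fun k => ?_
    cases k with
    | L b =>
      by_cases hb : b = 0
      · subst hb; simp
      · simp [hB.repr_apply_L_zero_L hψ hb, hb]
    | I j => simp [hB.repr_apply_L_zero_I hψ j]
    | CL => simp
  conv_lhs => rw [h, add_lie, smul_lie, smul_lie, hB.CL_lie, smul_zero, add_zero]

theorem repr_apply_I_L_add_self {b : G} (hb : b ≠ 0) :
    bas.repr (ψ (bas (.I b))) (.L (b + b)) = 0 := by
  have e := hψ.two_mul_repr bas (bas (.L b)) (bas (.I 0)) (.L (b + b))
  rw [hB.lie_L_I, add_zero, map_smul, map_smul, Finsupp.smul_apply, ← lie_skew (ψ _), map_neg,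
    Finsupp.neg_apply, hB.repr_I_lie_L, hB.repr_L_lie_L, add_sub_cancel_right] at e
  push_cast at e
  have hbC : (b : ℂ) ≠ 0 := fun h => hb (Subtype.ext h)
  refine (mul_eq_zero.mp ?_).resolve_left hbC
  linear_combination e / 2

variable {α : ℂ} (hu : ∀ y : Lg, ⁅ψ (bas (.L 0)), y⁆ = α • ⁅bas (.L 0), y⁆)

include hu

theorem repr_apply_eq_zero_of_weight_ne {i k : DGHVIdx G} (hki : k ≠ i)
    (hk : k.weight ≠ 2 * i.weight) : bas.repr (ψ (bas i)) k = 0 :=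
  hψ.repr_apply_basis_eq_zero bas hB.L_zero_lie hu hki hk

theorem repr_apply_self_of_weight_ne_zero {i : DGHVIdx G} (hi : i.weight ≠ 0) :
    bas.repr (ψ (bas i)) i = α :=
  hψ.repr_apply_basis_self bas hB.L_zero_lie hu hi

theorem repr_apply_L_L_add_self {b : G} (hb : b ≠ 0) :
    bas.repr (ψ (bas (.L b))) (.L (b + b)) = 0 := by
  have e := hψ.two_mul_repr bas (bas (.L b)) (bas (.I (-b))) (.I b)
  rw [hB.lie_L_I, map_smul, map_smul, Finsupp.smul_apply, ← lie_skew (ψ _), map_neg,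
    Finsupp.neg_apply, hB.repr_I_lie_I, hB.repr_L_lie_I, sub_neg_eq_add, sub_self,
    hB.repr_apply_eq_zero_of_weight_ne hψ hu (i := .I (-b)) (k := .I 0) (by simp [hb])
      (by simp [DGHVIdx.weight, hb])] at e
  push_cast at e
  have hbC : (b : ℂ) ≠ 0 := fun h => hb (Subtype.ext h)
  refine (mul_eq_zero.mp ?_).resolve_left hbC
  linear_combination -e

theorem repr_apply_I_I_add_self {b : G} (hb : b ≠ 0) :
    bas.repr (ψ (bas (.I b))) (.I (b + b)) = 0 := by
  have e := hψ.two_mul_repr bas (bas (.L b)) (bas (.I 0)) (.I (b + b))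
  rw [hB.lie_L_I, add_zero, map_smul, map_smul, Finsupp.smul_apply, ← lie_skew (ψ _), map_neg,
    Finsupp.neg_apply, hB.repr_I_lie_I, hB.repr_L_lie_I, sub_zero, add_sub_cancel_right,
    hB.repr_apply_L_L_add_self hψ hu hb,
    hB.repr_apply_eq_zero_of_weight_ne hψ hu (i := .I 0) (k := .I b) (by simpa using hb)
      (by simp [DGHVIdx.weight, hb])] at e
  push_cast at e
  have hbC : (b : ℂ) ≠ 0 := fun h => hb (Subtype.ext h)
  refine (mul_eq_zero.mp ?_).resolve_left hbC
  linear_combination e / 2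

theorem repr_apply_L_I_add_self [Nontrivial G] {b : G} (hb : b ≠ 0) :
    bas.repr (ψ (bas (.L b))) (.I (b + b)) = 0 := by
  obtain ⟨c, hc⟩ := G.exists_coe_notMem {0, (b : ℂ), (b : ℂ) / 2}
  simp only [Finset.mem_insert, Finset.mem_singleton, not_or] at hc
  obtain ⟨hc0, hcb, hc2⟩ := hc
  have w₁ : (DGHVIdx.I (b + b - (b - c))).weight ≠ 2 * (DGHVIdx.L c).weight := by
    simp only [DGHVIdx.weight]; push_cast
    exact fun h => hcb (by linear_combination -h)
  have w₂ : (DGHVIdx.I (b + b - c)).weight ≠ 2 * (DGHVIdx.L (b - c)).weight := by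
    simp only [DGHVIdx.weight]; push_cast
    exact fun h => hc0 (by linear_combination h)
  have e := hψ.two_mul_repr bas (bas (.L c)) (bas (.L (b - c))) (.I (b + b))
  rw [hB.lie_L_L, add_sub_cancel, if_neg hb, zero_smul, add_zero, map_smul, map_smul,
    Finsupp.smul_apply, smul_eq_mul, ← lie_skew (ψ _), map_neg, Finsupp.neg_apply,
    hB.repr_L_lie_I, hB.repr_L_lie_I, hB.repr_apply_eq_zero_of_weight_ne hψ hu (by simp) w₁,
    hB.repr_apply_eq_zero_of_weight_ne hψ hu (by simp) w₂] at e
  push_cast at e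
  have hbc : (b : ℂ) - 2 * c ≠ 0 := fun h => hc2 (by linear_combination -h / 2)
  refine (mul_eq_zero.mp ?_).resolve_left hbc
  linear_combination e / 2

theorem repr_apply_I_zero_L_zero [Nontrivial G] : bas.repr (ψ (bas (.I 0))) (.L 0) = 0 := by
  obtain ⟨g, hg⟩ := exists_ne (0 : G)
  have e := hψ.two_mul_repr bas (bas (.L g)) (bas (.I 0)) (.L g)
  rw [hB.lie_L_I, add_zero, map_smul, map_smul, Finsupp.smul_apply, ← lie_skew (ψ _), map_neg,
    Finsupp.neg_apply, hB.repr_I_lie_L, hB.repr_L_lie_L, sub_self,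
    hB.repr_apply_eq_zero_of_weight_ne hψ hu (i := .I g) (k := .L g) (by simp) ?_] at e
  · push_cast at e
    have hgC : (g : ℂ) ≠ 0 := fun h => hg (Subtype.ext h)
    refine (mul_eq_zero.mp ?_).resolve_left hgC
    linear_combination e
  · simp only [DGHVIdx.weight]
    exact fun h => hg (Subtype.ext (by push_cast; linear_combination -h))

theorem repr_apply_I_zero_I_zero [Nontrivial G] : bas.repr (ψ (bas (.I 0))) (.I 0) = α := by
  obtain ⟨g, hg⟩ := exists_ne (0 : G)
  have hgC : (g : ℂ) ≠ 0 := fun h => hg (Subtype.ext h)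
  have e := hψ.two_mul_repr bas (bas (.L g)) (bas (.I 0)) (.I g)
  rw [hB.lie_L_I, add_zero, map_smul, map_smul, Finsupp.smul_apply, ← lie_skew (ψ _), map_neg,
    Finsupp.neg_apply, hB.repr_I_lie_I, hB.repr_L_lie_I, sub_zero, sub_self,
    hB.repr_apply_self_of_weight_ne_zero hψ hu (i := .I g) hgC,
    hB.repr_apply_self_of_weight_ne_zero hψ hu (i := .L g) hgC] at e
  push_cast at e
  refine mul_left_cancel₀ hgC ?_
  linear_combination -e

theorem four_mul_repr_apply_L_zero_CL {a : G} (ha : a ≠ 0) :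
    4 * a * bas.repr (ψ (bas (.L 0))) .CL =
      ((a : ℂ) ^ 3 - a) / 6 * (bas.repr (ψ (bas .CL)) .CL - α) := by
  have haC : (a : ℂ) ≠ 0 := fun h => ha (Subtype.ext h)
  have e := hψ.two_mul_repr bas (bas (.L a)) (bas (.L (-a))) .CL
  rw [hB.lie_L_L, add_neg_cancel, if_pos rfl, map_add, map_smul, map_smul, map_add, map_smul,
    map_smul, Finsupp.add_apply, Finsupp.smul_apply, Finsupp.smul_apply, smul_eq_mul, smul_eq_mul,
    ← lie_skew (ψ _), map_neg, Finsupp.neg_apply, hB.repr_L_lie_CL, hB.repr_L_lie_CL, neg_neg,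
    hB.repr_apply_self_of_weight_ne_zero hψ hu (i := .L a) haC,
    hB.repr_apply_self_of_weight_ne_zero hψ hu (i := .L (-a))
      (by simpa [DGHVIdx.weight] using haC)] at e
  push_cast at e
  linear_combination -e

theorem repr_apply_CL_CL [Nontrivial G] : bas.repr (ψ (bas .CL)) .CL = α := by
  obtain ⟨g, hg⟩ := exists_ne (0 : G)
  have hgC : (g : ℂ) ≠ 0 := fun h => hg (Subtype.ext h)
  have e₁ := hB.four_mul_repr_apply_L_zero_CL hψ hu hg
  have e₂ := hB.four_mul_repr_apply_L_zero_CL hψ hu (a := g + g)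
    fun h => hg (by simpa using congrArg ((↑) : G → ℂ) h)
  push_cast at e₂
  refine sub_eq_zero.mp ((mul_eq_zero.mp ?_).resolve_left (pow_ne_zero 3 hgC))
  linear_combination 2 * e₁ - e₂

theorem repr_apply_L_zero_CL [Nontrivial G] : bas.repr (ψ (bas (.L 0))) .CL = 0 := by
  obtain ⟨g, hg⟩ := exists_ne (0 : G)
  have hgC : (g : ℂ) ≠ 0 := fun h => hg (Subtype.ext h)
  have e := hB.four_mul_repr_apply_L_zero_CL hψ hu hg
  rw [hB.repr_apply_CL_CL hψ hu, sub_self, mul_zero] at e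
  exact (mul_eq_zero.mp e).resolve_left (mul_ne_zero (by norm_num) hgC)

theorem repr_apply_self [Nontrivial G] (i : DGHVIdx G) : bas.repr (ψ (bas i)) i = α := by
  by_cases hi : i.weight = 0
  · cases i with
    | L b =>
      obtain rfl : b = 0 := Subtype.ext hi
      exact hB.repr_L_zero_eq_of_lie_eq hu
    | I b =>
      obtain rfl : b = 0 := Subtype.ext hi
      exact hB.repr_apply_I_zero_I_zero hψ hu
    | CL => exact hB.repr_apply_CL_CL hψ hu
  · exact hB.repr_apply_self_of_weight_ne_zero hψ hu hi

theorem repr_apply_L_of_ne [Nontrivial G] {b : G} {k : DGHVIdx G} (hk : k ≠ .L b) :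
    bas.repr (ψ (bas (.L b))) k = 0 := by
  by_cases hw : k.weight = 2 * (DGHVIdx.L b).weight
  · cases k with
    | L c =>
      obtain rfl := AddSubgroup.coe_eq_two_mul_coe_iff.mp hw
      have hb : b ≠ 0 := fun hb => hk (by rw [hb, add_zero])
      exact hB.repr_apply_L_L_add_self hψ hu hb
    | I c =>
      obtain rfl := AddSubgroup.coe_eq_two_mul_coe_iff.mp hw
      by_cases hb : b = 0
      · subst hb
        rw [add_zero]
        exact hB.repr_apply_L_zero_I hψ 0
      · exact hB.repr_apply_L_I_add_self hψ hu hb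
    | CL =>
      obtain rfl : b = 0 := Subtype.ext (by simpa [DGHVIdx.weight] using hw.symm)
      exact hB.repr_apply_L_zero_CL hψ hu
  · exact hB.repr_apply_eq_zero_of_weight_ne hψ hu hk hw

theorem repr_apply_I_of_ne [Nontrivial G] {b : G} {k : DGHVIdx G} (hk : k ≠ .I b)
    (hCL : b = 0 → k ≠ .CL) : bas.repr (ψ (bas (.I b))) k = 0 := by
  by_cases hw : k.weight = 2 * (DGHVIdx.I b).weight
  · cases k with
    | L c =>
      obtain rfl := AddSubgroup.coe_eq_two_mul_coe_iff.mp hw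
      by_cases hb : b = 0
      · subst hb
        rw [add_zero]
        exact hB.repr_apply_I_zero_L_zero hψ hu
      · exact hB.repr_apply_I_L_add_self hψ hb
    | I c =>
      obtain rfl := AddSubgroup.coe_eq_two_mul_coe_iff.mp hw
      have hb : b ≠ 0 := fun hb => hk (by rw [hb, add_zero])
      exact hB.repr_apply_I_I_add_self hψ hu hb
    | CL =>
      exact absurd rfl (hCL (Subtype.ext (by simpa [DGHVIdx.weight] using hw.symm)))
  · exact hB.repr_apply_eq_zero_of_weight_ne hψ hu hk hw

theorem eq_smul_id_add_smul_smulRight_coord [Nontrivial G] :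
    ψ = α • LinearMap.id +
      bas.repr (ψ (bas (.I 0))) .CL • (bas.coord (.I 0)).smulRight (bas .CL) := by
  refine bas.ext fun i => bas.ext_elem fun k => ?_
  simp only [LinearMap.add_apply, LinearMap.smul_apply, LinearMap.id_apply,
    LinearMap.smulRight_apply, Module.Basis.coord_apply, map_add, map_smul, Finsupp.add_apply,
    Finsupp.smul_apply, bas.repr_self, smul_eq_mul, Finsupp.single_apply]
  by_cases hki : k = i
  · subst hki
    cases k <;> simp [hB.repr_apply_self hψ hu]
  · cases i with
    | L b => simp [hB.repr_apply_L_of_ne hψ hu hki, Ne.symm hki]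
    | I b =>
      by_cases h : b = 0 ∧ k = .CL
      · obtain ⟨rfl, rfl⟩ := h
        simp
      · rw [hB.repr_apply_I_of_ne hψ hu hki (not_and.mp h)]
        simp [Ne.symm hki]
        exact fun hk hb => absurd ⟨hb, hk.symm⟩ h
    | CL => simp [hB.repr_apply_CL_of_ne hψ hki, Ne.symm hki]

end IsDGHVBasis

/-- the `1/2`-derivations of `g(G, -1)` are exactly the linear
combinations of the identity map and the map `φ` with `φ(I_0) = C_L` and `φ`
vanishing on all other basis vectors. -/
theorem halfDerivation_dgHV_neg_one_iff
    (G : AddSubgroup ℂ) [Nontrivial G]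
    (Lg : Type*) [LieRing Lg] [LieAlgebra ℂ Lg]
    (bas : Module.Basis (DGHVIdx G) ℂ Lg)
    (hLL : ∀ a b : G, ⁅bas (DGHVIdx.L a), bas (DGHVIdx.L b)⁆ =
      ((b : ℂ) - (a : ℂ)) • bas (DGHVIdx.L (a + b)) +
        (if a + b = 0 then ((a : ℂ) ^ 3 - (a : ℂ)) / 12 else 0) • bas DGHVIdx.CL)
    (hLI : ∀ a b : G, ⁅bas (DGHVIdx.L a), bas (DGHVIdx.I b)⁆ =
      ((a : ℂ) + (b : ℂ)) • bas (DGHVIdx.I (a + b)))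
    (hII : ∀ a b : G, ⁅bas (DGHVIdx.I a), bas (DGHVIdx.I b)⁆ = 0)
    (hCL : ∀ x : Lg, ⁅bas DGHVIdx.CL, x⁆ = 0)
    (ψ : Lg →ₗ[ℂ] Lg) :
    (∀ x y : Lg, ψ ⁅x, y⁆ = (1 / 2 : ℂ) • (⁅ψ x, y⁆ + ⁅x, ψ y⁆)) ↔
      ∃ α α' : ℂ, ψ = α • (LinearMap.id : Lg →ₗ[ℂ] Lg) +
        α' • (bas.constr ℂ (fun idx => match idx with
          | DGHVIdx.L _ => 0
          | DGHVIdx.I a => if a = 0 then bas DGHVIdx.CL else 0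
          | DGHVIdx.CL => 0)) := by
  have hB : IsDGHVBasis bas := ⟨hLL, hLI, hII, hCL⟩
  rw [bas.constr_eq_smulRight_coord (i₀ := .I 0) (v := bas .CL) ?hφ]
  case hφ => intro i; cases i <;> simp
  constructor
  · intro hψ
    exact ⟨_, _, hB.eq_smul_id_add_smul_smulRight_coord hψ (hB.lie_apply_L_zero hψ)⟩
  · rintro ⟨α, α', rfl⟩
    exact (isHalfDerivation_id.smul α).add (hB.isHalfDerivation_smulRight_coord_I_zero.smul α')
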